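/- arXiv:1710.02501 — 4 statements merged into one kernel-verified Lean document; each statement's English description precedes it below -/
import Mathlib

section
/- If (P,ℒ) is a linear system with maximum degree Δ = 2, then ⌈ν₂/2⌉ ≤ τ ≤ ν₂ − 1, where τ is the transversal number and ν₂ is the 2-packing number of (P,ℒ). -/
/-!
When no point lies on three lines, the whole family `ℒ` is a 2-packing, so `ν₂ = |ℒ|`.
A transversal `T` covers each line at one of its points, each of which lies on at most two
lines, so `|ℒ| ≤ 2|T|`. Conversely, a point `p` of degree two together with one point from each
line avoiding `p` is a transversal with at most `|ℒ| - 1` points.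
-/

open Finset

/-- `(P, L)` is a linear system: lines are nonempty subsets of the point set `P`,
and any two distinct lines share at most one point. -/
def IsLinearSystem {α : Type*} [DecidableEq α] (P : Finset α) (L : Finset (Finset α)) : Prop :=
  (∀ l ∈ L, l.Nonempty) ∧ (∀ l ∈ L, l ⊆ P) ∧
    ∀ l ∈ L, ∀ l' ∈ L, l ≠ l' → (l ∩ l').card ≤ 1

/-- `T` is a transversal of the linear system `(P, L)`. -/
def IsTransversal {α : Type*} [DecidableEq α] (P : Finset α) (L : Finset (Finset α))
    (T : Finset α) : Prop :=
  T ⊆ P ∧ ∀ l ∈ L, (T ∩ l).Nonempty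

/-- The transversal number `τ` of `(P, L)`. -/
noncomputable def tau {α : Type*} [DecidableEq α] (P : Finset α) (L : Finset (Finset α)) : ℕ :=
  sInf {n | ∃ T : Finset α, IsTransversal P L T ∧ T.card = n}

/-- `R` is a 2-packing of `L`: no three distinct lines of `R` have a common point. -/
def Is2Packing {α : Type*} [DecidableEq α] (L R : Finset (Finset α)) : Prop :=
  R ⊆ L ∧ ∀ l₁ ∈ R, ∀ l₂ ∈ R, ∀ l₃ ∈ R,
    l₁ ≠ l₂ → l₁ ≠ l₃ → l₂ ≠ l₃ → l₁ ∩ l₂ ∩ l₃ = ∅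

/-- The 2-packing number `ν₂` of `(P, L)`. -/
noncomputable def nu2 {α : Type*} [DecidableEq α] (L : Finset (Finset α)) : ℕ :=
  sSup {n | ∃ R : Finset (Finset α), Is2Packing L R ∧ R.card = n}

/-- The degree of a point `p`: the number of lines containing `p`. -/
def degree {α : Type*} [DecidableEq α] (L : Finset (Finset α)) (p : α) : ℕ :=
  (L.filter fun l => p ∈ l).card

/-- The maximum degree `Δ` over all points of `P`. -/
def maxDegree {α : Type*} [DecidableEq α] (P : Finset α) (L : Finset (Finset α)) : ℕ :=
  P.sup (degree L)

section LinearSystem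

variable {α : Type*} [DecidableEq α] {P : Finset α} {L : Finset (Finset α)}

theorem degree_le_maxDegree {p : α} (hp : p ∈ P) : degree L p ≤ maxDegree P L :=
  le_sup hp

theorem exists_degree_eq_maxDegree (h : maxDegree P L ≠ 0) :
    ∃ p ∈ P, degree L p = maxDegree P L := by
  obtain rfl | hP := P.eq_empty_or_nonempty
  · exact absurd rfl h
  · obtain ⟨p, hp, hsup⟩ := exists_mem_eq_sup P hP (degree L)
    exact ⟨p, hp, hsup.symm⟩

theorem is2Packing_self_of_degree_le_two (hsub : ∀ l ∈ L, l ⊆ P)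
    (hdeg : ∀ p ∈ P, degree L p ≤ 2) : Is2Packing L L := by
  refine ⟨Subset.rfl, fun l₁ h₁ l₂ h₂ l₃ h₃ h₁₂ h₁₃ h₂₃ => eq_empty_of_forall_notMem ?_⟩
  rintro p hp
  simp only [mem_inter] at hp
  have hthree : 2 < degree L p :=
    two_lt_card.2 ⟨l₁, mem_filter.2 ⟨h₁, hp.1.1⟩, l₂, mem_filter.2 ⟨h₂, hp.1.2⟩,
      l₃, mem_filter.2 ⟨h₃, hp.2⟩, h₁₂, h₁₃, h₂₃⟩
  exact (hdeg p (hsub l₁ h₁ hp.1.1)).not_gt hthree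

theorem nu2_eq_card_of_is2Packing_self (h : Is2Packing L L) : nu2 L = L.card := by
  have hbdd : ∀ n ∈ {n | ∃ R, Is2Packing L R ∧ R.card = n}, n ≤ L.card := by
    rintro n ⟨R, hR, rfl⟩
    exact card_le_card hR.1
  exact le_antisymm (csSup_le ⟨L.card, L, h, rfl⟩ hbdd) (le_csSup ⟨L.card, hbdd⟩ ⟨L, h, rfl⟩)

theorem tau_le_card {T : Finset α} (hT : IsTransversal P L T) : tau P L ≤ T.card :=
  Nat.sInf_le ⟨T, hT, rfl⟩

theorem exists_isTransversal_card_eq_tau (h : ∃ T, IsTransversal P L T) :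
    ∃ T, IsTransversal P L T ∧ T.card = tau P L :=
  Nat.sInf_mem (s := {n | ∃ T, IsTransversal P L T ∧ T.card = n})
    (h.elim fun T hT => ⟨T.card, T, hT, rfl⟩)

theorem exists_isTransversal_card_le (hne : ∀ l ∈ L, l.Nonempty) (hsub : ∀ l ∈ L, l ⊆ P) :
    ∃ T, IsTransversal P L T ∧ T.card ≤ L.card := by
  induction L using Finset.induction_on with
  | empty => exact ⟨∅, ⟨empty_subset P, by simp⟩, le_rfl⟩
  | insert l L hl ih =>
    obtain ⟨T, ⟨hTP, hTL⟩, hcard⟩ :=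
      ih (fun m hm => hne m (mem_insert_of_mem hm)) (fun m hm => hsub m (mem_insert_of_mem hm))
    obtain ⟨x, hx⟩ := hne l (mem_insert_self l L)
    refine ⟨insert x T, ⟨insert_subset (hsub l (mem_insert_self l L) hx) hTP, ?_⟩, ?_⟩
    · intro m hm
      rcases mem_insert.1 hm with rfl | hm
      · exact ⟨x, mem_inter.2 ⟨mem_insert_self x T, hx⟩⟩
      · exact (hTL m hm).mono (inter_subset_inter_right (subset_insert x T))
    · rw [card_insert_of_notMem hl]
      exact (card_insert_le x T).trans (Nat.succ_le_succ hcard)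

theorem tau_le_card_add_one_sub_degree (hne : ∀ l ∈ L, l.Nonempty) (hsub : ∀ l ∈ L, l ⊆ P)
    {p : α} (hp : p ∈ P) : tau P L ≤ L.card + 1 - degree L p := by
  obtain ⟨T, ⟨hTP, hTL⟩, hcard⟩ := exists_isTransversal_card_le (P := P)
    (L := L.filter (p ∉ ·)) (fun l hl => hne l (mem_filter.1 hl).1)
    (fun l hl => hsub l (mem_filter.1 hl).1)
  have hT : IsTransversal P L (insert p T) := by
    refine ⟨insert_subset hp hTP, fun l hl => ?_⟩
    by_cases hpl : p ∈ l
    · exact ⟨p, mem_inter.2 ⟨mem_insert_self p T, hpl⟩⟩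
    · exact (hTL l (mem_filter.2 ⟨hl, hpl⟩)).mono (inter_subset_inter_right (subset_insert p T))
  have hsplit := card_filter_add_card_filter_not (s := L) (p ∈ ·)
  calc tau P L ≤ (insert p T).card := tau_le_card hT
    _ ≤ T.card + 1 := card_insert_le p T
    _ ≤ L.card + 1 - degree L p := by unfold degree; omega

theorem card_le_mul_card_of_isTransversal {T : Finset α} (hT : IsTransversal P L T) {d : ℕ}
    (hdeg : ∀ p ∈ P, degree L p ≤ d) : L.card ≤ d * T.card := by
  have hcover : L ⊆ T.biUnion fun t => L.filter (t ∈ ·) := by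
    intro l hl
    obtain ⟨t, ht⟩ := hT.2 l hl
    exact mem_biUnion.2 ⟨t, (mem_inter.1 ht).1, mem_filter.2 ⟨hl, (mem_inter.1 ht).2⟩⟩
  calc L.card ≤ ∑ t ∈ T, degree L t := (card_le_card hcover).trans card_biUnion_le
    _ ≤ T.card • d := sum_le_card_nsmul T _ d fun t ht => hdeg t (hT.1 ht)
    _ = d * T.card := by rw [smul_eq_mul, mul_comm]

end LinearSystem

/-- In a linear system with maximum degree `Δ = 2`,
`⌈ν₂/2⌉ ≤ τ ≤ ν₂ - 1`. -/
theorem stmt1 {α : Type*} [DecidableEq α] (P : Finset α) (L : Finset (Finset α))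
    (hLS : IsLinearSystem P L) (hΔ : maxDegree P L = 2) :
    (nu2 L + 1) / 2 ≤ tau P L ∧ tau P L ≤ nu2 L - 1 := by
  obtain ⟨hne, hsub, -⟩ := hLS
  have hdeg : ∀ p ∈ P, degree L p ≤ 2 := fun p hp => hΔ ▸ degree_le_maxDegree hp
  rw [nu2_eq_card_of_is2Packing_self (is2Packing_self_of_degree_le_two hsub hdeg)]
  obtain ⟨p, hp, hpdeg⟩ := exists_degree_eq_maxDegree (L := L) (by rw [hΔ]; decide)
  have hupper := tau_le_card_add_one_sub_degree hne hsub hp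
  obtain ⟨T, hT, hTcard⟩ := exists_isTransversal_card_eq_tau
    ((exists_isTransversal_card_le hne hsub).imp fun _ h => h.1)
  have hlower := card_le_mul_card_of_isTransversal hT hdeg
  omega
end

section
/- Let r ≥ 2 and let (P,ℒ) be an r-uniform linear system with maximum degree Δ = 2 in which every point of P lies on at least one line. Then ⌈ν₂/2⌉ ≤ ⌊(|P| + |ℒ|)/(r+1)⌋ ≤ ν₂ − 1, where ν₂ is the 2-packing number of (P,ℒ). -/
/-! With `Δ ≤ 2` no point lies on three lines, so `ℒ` itself is a 2-packing and `ν₂ = |ℒ|`.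
Let `d` be the number of points of degree 2. Counting incidences gives `|P| + d = r |ℒ|`, so
`|P| + |ℒ| = (r + 1) |ℒ| - d`, and both inequalities become bounds on `d`: the right one says
`d ≥ 1` (that is `Δ = 2`), the left one `d ≤ (r + 1) ⌊|ℒ|/2⌋`, which follows from `2d ≤ r |ℒ|`
together with `d ≤ (|ℒ| choose 2)` (two lines meet in at most one point). -/

open Finset

section Arithmetic

variable {n m r d : ℕ}

theorem le_succ_mul_half (hr : 2 * d ≤ r * m) (hm : 2 * d ≤ m * (m - 1)) :
    d ≤ (r + 1) * (m / 2) := by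
  obtain ⟨q, rfl | rfl⟩ := Nat.even_or_odd' m
  · rw [Nat.mul_div_cancel_left q two_pos]
    nlinarith
  · rw [show (2 * q + 1) / 2 = q by omega]
    rw [show 2 * q + 1 - 1 = 2 * q by omega] at hm
    rcases le_or_gt r (2 * q) with h | h <;> nlinarith

theorem succ_div_two_le_div (hcount : n + d = r * m) (hdn : d ≤ n) (hd : d ≤ m.choose 2) :
    (m + 1) / 2 ≤ (n + m) / (r + 1) := by
  have hd' : 2 * d ≤ m * (m - 1) := by
    rw [Nat.choose_two_right] at hd
    have := Nat.div_mul_le_self (m * (m - 1)) 2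
    omega
  have key := le_succ_mul_half (r := r) (by omega) hd'
  rw [Nat.le_div_iff_mul_le (Nat.add_one_pos r)]
  have hhalf : (m + 1) / 2 + m / 2 = m := by omega
  nlinarith

theorem div_le_pred (hcount : n + d = r * m) (hd : 0 < d) : (n + m) / (r + 1) ≤ m - 1 := by
  have := (Nat.div_lt_iff_lt_mul (Nat.add_one_pos r)).mpr (show n + m < m * (r + 1) by nlinarith)
  omega

end Arithmetic

section LinearSystem

variable {α : Type*} [DecidableEq α] {P : Finset α} {L : Finset (Finset α)}

theorem is2Packing_self (h : ∀ l ∈ L, ∀ p ∈ l, degree L p ≤ 2) : Is2Packing L L := by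
  refine ⟨Subset.rfl, fun l₁ h₁ l₂ h₂ l₃ h₃ h12 h13 h23 => eq_empty_of_forall_notMem ?_⟩
  intro p hp
  simp only [mem_inter] at hp
  have : 2 < degree L p :=
    two_lt_card.mpr ⟨l₁, by simp [h₁, hp.1.1], l₂, by simp [h₂, hp.1.2], l₃, by simp [h₃, hp.2],
      h12, h13, h23⟩
  exact this.not_ge (h l₁ h₁ p hp.1.1)

theorem sum_degree_eq_sum_card (hsub : ∀ l ∈ L, l ⊆ P) :
    ∑ p ∈ P, degree L p = ∑ l ∈ L, l.card := by
  calc ∑ p ∈ P, degree L p = ∑ l ∈ L, #{p ∈ P | p ∈ l} := by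
        simp only [degree, card_eq_sum_ones, sum_filter]
        exact sum_comm
    _ = ∑ l ∈ L, l.card := sum_congr rfl fun l hl => by
        rw [filter_mem_eq_inter, inter_eq_right.mpr (hsub l hl)]

theorem sum_degree_eq_card_add_card_filter (h : ∀ p ∈ P, 1 ≤ degree L p ∧ degree L p ≤ 2) :
    ∑ p ∈ P, degree L p = P.card + #{p ∈ P | degree L p = 2} := by
  rw [card_eq_sum_ones, card_filter, ← sum_add_distrib]
  refine sum_congr rfl fun p hp => ?_
  have := h p hp
  split_ifs <;> omega

theorem card_filter_degree_eq_two_le_choose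
    (hlin : ∀ l ∈ L, ∀ l' ∈ L, l ≠ l' → (l ∩ l').card ≤ 1) :
    #{p ∈ P | degree L p = 2} ≤ L.card.choose 2 := by
  rw [← card_powersetCard]
  refine card_le_card_of_injOn (fun p => {l ∈ L | p ∈ l}) (fun p hp => ?_) fun p hp q _ hpq => ?_
  · exact mem_powersetCard.mpr ⟨filter_subset _ _, (mem_filter.mp hp).2⟩
  · by_contra hne
    obtain ⟨l₁, l₂, h12, hlines⟩ := card_eq_two.mp (mem_filter.mp hp).2
    have hlines' : {l ∈ L | q ∈ l} = {l₁, l₂} :=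
      (show {l ∈ L | p ∈ l} = {l ∈ L | q ∈ l} from hpq).symm.trans hlines
    have hmem : ∀ l ∈ ({l₁, l₂} : Finset (Finset α)), l ∈ L ∧ p ∈ l ∧ q ∈ l := by
      intro l hl
      have hpl : l ∈ {l ∈ L | p ∈ l} := hlines ▸ hl
      have hql : l ∈ {l ∈ L | q ∈ l} := hlines' ▸ hl
      simp only [mem_filter] at hpl hql
      exact ⟨hpl.1, hpl.2, hql.2⟩
    obtain ⟨hl₁, hp₁, hq₁⟩ := hmem l₁ (by simp)
    obtain ⟨hl₂, hp₂, hq₂⟩ := hmem l₂ (by simp)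
    have hmeet : 1 < (l₁ ∩ l₂).card :=
      one_lt_card.mpr ⟨p, mem_inter.mpr ⟨hp₁, hp₂⟩, q, mem_inter.mpr ⟨hq₁, hq₂⟩, hne⟩
    exact hmeet.not_ge (hlin l₁ hl₁ l₂ hl₂ h12)

end LinearSystem

theorem stmt2_general {α : Type*} [DecidableEq α] (P : Finset α) (L : Finset (Finset α))
    (r : ℕ) (hLS : IsLinearSystem P L)
    (huniform : ∀ l ∈ L, l.card = r) (hΔ : maxDegree P L = 2)
    (hcov : ∀ p ∈ P, ∃ l ∈ L, p ∈ l) :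
    (nu2 L + 1) / 2 ≤ (P.card + L.card) / (r + 1) ∧
      (P.card + L.card) / (r + 1) ≤ nu2 L - 1 := by
  obtain ⟨-, hsub, hlin⟩ := hLS
  have hdeg_le : ∀ p ∈ P, degree L p ≤ 2 := fun p hp => hΔ ▸ le_sup hp
  have hdeg_pos : ∀ p ∈ P, 1 ≤ degree L p := fun p hp => by
    obtain ⟨l, hl, hpl⟩ := hcov p hp
    exact card_pos.mpr ⟨l, mem_filter.mpr ⟨hl, hpl⟩⟩
  rw [nu2_eq_card_of_is2Packing_self
    (is2Packing_self fun l hl p hp => hdeg_le p (hsub l hl hp))]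
  have hcount : P.card + #{p ∈ P | degree L p = 2} = r * L.card := by
    rw [← sum_degree_eq_card_add_card_filter fun p hp => ⟨hdeg_pos p hp, hdeg_le p hp⟩,
      sum_degree_eq_sum_card hsub, sum_congr rfl huniform, sum_const, smul_eq_mul, mul_comm]
  have hd_pos : 0 < #{p ∈ P | degree L p = 2} := by
    obtain ⟨p, hp, hpΔ⟩ := exists_degree_eq_maxDegree (hΔ ▸ two_ne_zero)
    exact card_pos.mpr ⟨p, mem_filter.mpr ⟨hp, hpΔ.trans hΔ⟩⟩
  exact ⟨succ_div_two_le_div hcount (card_filter_le _ _)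
      (card_filter_degree_eq_two_le_choose hlin), div_le_pred hcount hd_pos⟩

/-- In an `r`-uniform linear system (`r ≥ 2`) with `Δ = 2` in which
every point lies on at least one line,
`⌈ν₂/2⌉ ≤ ⌊(|P| + |ℒ|)/(r+1)⌋ ≤ ν₂ - 1`. -/
theorem stmt2 {α : Type*} [DecidableEq α] (P : Finset α) (L : Finset (Finset α))
    (r : ℕ) (hr : 2 ≤ r) (hLS : IsLinearSystem P L)
    (huniform : ∀ l ∈ L, l.card = r) (hΔ : maxDegree P L = 2)
    (hcov : ∀ p ∈ P, ∃ l ∈ L, p ∈ l) :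
    (nu2 L + 1) / 2 ≤ (P.card + L.card) / (r + 1) ∧
      (P.card + L.card) / (r + 1) ≤ nu2 L - 1 :=
  stmt2_general P L r hLS huniform hΔ hcov
end

section
/- Let r ≥ 2 and let (P,ℒ) be an r-uniform linear system whose 2-packing number ν₂ satisfies ν₂ − 1 ≤ r. Then (r+1)·⌈ν₂/2⌉ ≤ |P| + |ℒ| (equivalently, ⌈ν₂/2⌉ ≤ (|P| + |ℒ|)/(r+1)). -/
open Finset

/-
Take a 2-packing `R` with `ν₂` lines. Any two of its lines meet in at most one point, so their
union has at least `ν₂ r - C(ν₂, 2)` points (Bonferroni). Hence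
`|P| + |ℒ| ≥ ν₂ (r + 1) - C(ν₂, 2)`, and `C(ν₂, 2) ≤ ⌊ν₂/2⌋ ν₂ ≤ ⌊ν₂/2⌋ (r + 1)`
because `ν₂ ≤ r + 1`.
-/

lemma exists_is2Packing_card_eq_nu2 {α : Type*} [DecidableEq α] (L : Finset (Finset α)) :
    ∃ R, Is2Packing L R ∧ R.card = nu2 L := by
  refine Nat.sSup_mem (s := {n | ∃ R, Is2Packing L R ∧ R.card = n}) ⟨0, ∅, ?_, rfl⟩
    ⟨L.card, ?_⟩
  · exact ⟨empty_subset _, by simp⟩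
  · rintro n ⟨R, hR, rfl⟩
    exact card_le_card hR.1

lemma sum_card_le_card_biUnion_add_choose_two {α : Type*} [DecidableEq α]
    (R : Finset (Finset α)) (hR : ∀ l ∈ R, ∀ l' ∈ R, l ≠ l' → (l ∩ l').card ≤ 1) :
    ∑ l ∈ R, l.card ≤ (R.biUnion id).card + R.card.choose 2 := by
  induction R using Finset.induction_on with
  | empty => simp
  | @insert l R hl ih =>
    have hinter : (l ∩ R.biUnion id).card ≤ R.card :=
      calc (l ∩ R.biUnion id).card = (R.biUnion (l ∩ ·)).card := by
            rw [inter_biUnion]; rfl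
        _ ≤ ∑ l' ∈ R, (l ∩ l').card := card_biUnion_le
        _ ≤ ∑ _l' ∈ R, 1 := sum_le_sum fun l' hl' =>
            hR l (mem_insert_self l R) l' (mem_insert_of_mem hl') (ne_of_mem_of_not_mem hl' hl).symm
        _ = R.card := by simp
    have hunion := card_union_add_card_inter l (R.biUnion id)
    have ih' := ih fun a ha b hb => hR a (mem_insert_of_mem ha) b (mem_insert_of_mem hb)
    have hchoose : (R.card + 1).choose 2 = R.card + R.card.choose 2 := by
      rw [Nat.choose_succ_succ', Nat.choose_one_right]
    rw [sum_insert hl, card_insert_of_notMem hl, biUnion_insert, id_eq, hchoose]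
    omega

lemma Nat.choose_two_le_div_two_mul (n : ℕ) : n.choose 2 ≤ n / 2 * n := by
  rw [Nat.choose_two_right]
  refine Nat.div_le_of_le_mul ?_
  calc n * (n - 1) ≤ n * (2 * (n / 2)) := Nat.mul_le_mul_left n (by omega)
    _ = 2 * (n / 2 * n) := by ring

lemma succ_mul_ceil_half_add_choose_two_le {ν r : ℕ} (hν : ν ≤ r + 1) :
    (r + 1) * ((ν + 1) / 2) + ν.choose 2 ≤ ν * r + ν := by
  have hchoose : ν.choose 2 ≤ (r + 1) * (ν / 2) := by
    rw [Nat.mul_comm]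
    exact (Nat.choose_two_le_div_two_mul ν).trans (Nat.mul_le_mul_left _ hν)
  have hsplit : (ν + 1) / 2 + ν / 2 = ν := by omega
  calc (r + 1) * ((ν + 1) / 2) + ν.choose 2
      ≤ (r + 1) * ((ν + 1) / 2) + (r + 1) * (ν / 2) := by omega
    _ = ν * r + ν := by rw [← Nat.mul_add, hsplit]; ring

theorem stmt3_general {α : Type*} [DecidableEq α] (P : Finset α) (L : Finset (Finset α))
    (r : ℕ) (hLS : IsLinearSystem P L)
    (huniform : ∀ l ∈ L, l.card = r) (hν : nu2 L - 1 ≤ r) :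
    (r + 1) * ((nu2 L + 1) / 2) ≤ P.card + L.card := by
  obtain ⟨R, hR, hcard⟩ := exists_is2Packing_card_eq_nu2 L
  have hsum : ∑ l ∈ R, l.card = nu2 L * r := by
    rw [sum_congr rfl fun l hl => huniform l (hR.1 hl), sum_const, smul_eq_mul, hcard]
  have hbonferroni := sum_card_le_card_biUnion_add_choose_two R
    fun l hl l' hl' => hLS.2.2 l (hR.1 hl) l' (hR.1 hl')
  have hunion : (R.biUnion id).card ≤ P.card :=
    card_le_card (biUnion_subset.2 fun l hl => hLS.2.1 l (hR.1 hl))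
  have hlines : nu2 L ≤ L.card := hcard ▸ card_le_card hR.1
  have harith := succ_mul_ceil_half_add_choose_two_le (show nu2 L ≤ r + 1 by omega)
  rw [hsum, hcard] at hbonferroni
  omega

/-- In an `r`-uniform linear system (`r ≥ 2`) with `ν₂ - 1 ≤ r`,
`(r+1)·⌈ν₂/2⌉ ≤ |P| + |ℒ|`. -/
theorem stmt3 {α : Type*} [DecidableEq α] (P : Finset α) (L : Finset (Finset α))
    (r : ℕ) (hr : 2 ≤ r) (hLS : IsLinearSystem P L)
    (huniform : ∀ l ∈ L, l.card = r) (hν : nu2 L - 1 ≤ r) :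
    (r + 1) * ((nu2 L + 1) / 2) ≤ P.card + L.card :=
  stmt3_general P L r hLS huniform hν
end

section
/- Let r ≥ 2. Any r-uniform linear system (P,ℒ) with 2-packing number ν₂ = 4 and maximum degree Δ ≥ 5 satisfies (r+1)·τ ≤ |P| + |ℒ| (equivalently, τ ≤ (|P| + |ℒ|)/(r+1)), where τ is the transversal number. -/
open Finset

/-!
Let `p` be a point of degree at least `5`. If three lines avoiding `p` had no common point, their
three pairwise intersections would lie on at most three of the lines through `p`, so two further
lines through `p` would complete them to a 2-packing of size `5`, contradicting `ν₂ = 4`. Hence any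
three lines avoiding `p` meet, so all of them share a point once there are at least three, and
`τ ≤ 3`. On the other hand the five lines through `p` give `|P| ≥ 1 + 5(r - 1)` and `|ℒ| ≥ 5`.
-/

section

variable {α : Type*} [DecidableEq α] {P : Finset α} {L : Finset (Finset α)}

theorem card_le_nu2 {R : Finset (Finset α)} (hR : Is2Packing L R) : R.card ≤ nu2 L :=
  le_csSup ⟨L.card, by rintro n ⟨R', hR', rfl⟩; exact card_le_card hR'.1⟩ ⟨R, hR, rfl⟩

theorem is2Packing_of_degree_le_two {R : Finset (Finset α)} (hRL : R ⊆ L)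
    (hR : ∀ x, degree R x ≤ 2) : Is2Packing L R := by
  refine ⟨hRL, fun l₁ h₁ l₂ h₂ l₃ h₃ h₁₂ h₁₃ h₂₃ => eq_empty_of_forall_notMem fun x hx => ?_⟩
  simp only [mem_inter] at hx
  have : 2 < degree R x := two_lt_card.2 ⟨l₁, mem_filter.2 ⟨h₁, hx.1.1⟩,
    l₂, mem_filter.2 ⟨h₂, hx.1.2⟩, l₃, mem_filter.2 ⟨h₃, hx.2⟩, h₁₂, h₁₃, h₂₃⟩
  exact (hR x).not_gt this

theorem IsTransversal.insert_of_filter_notMem {T : Finset α} {p : α}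
    (hT : IsTransversal P (L.filter (p ∉ ·)) T) (hp : p ∈ P) :
    IsTransversal P L (insert p T) := by
  refine ⟨insert_subset hp hT.1, fun l hl => ?_⟩
  by_cases hpl : p ∈ l
  · exact ⟨p, mem_inter.2 ⟨mem_insert_self p T, hpl⟩⟩
  · exact (hT.2 l (mem_filter.2 ⟨hl, hpl⟩)).mono (inter_subset_inter_right (subset_insert p T))

namespace IsLinearSystem

theorem mono (h : IsLinearSystem P L) {L' : Finset (Finset α)} (hL' : L' ⊆ L) :
    IsLinearSystem P L' :=
  ⟨fun l hl => h.1 l (hL' hl), fun l hl => h.2.1 l (hL' hl),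
    fun l hl l' hl' => h.2.2 l (hL' hl) l' (hL' hl')⟩

theorem eq_of_mem_inter (h : IsLinearSystem P L) {l l' : Finset α} (hl : l ∈ L) (hl' : l' ∈ L)
    (hne : l ≠ l') {x y : α} (hx : x ∈ l) (hx' : x ∈ l') (hy : y ∈ l) (hy' : y ∈ l') : x = y :=
  card_le_one.1 (h.2.2 l hl l' hl' hne) x (mem_inter.2 ⟨hx, hx'⟩) y (mem_inter.2 ⟨hy, hy'⟩)

theorem eq_of_mem_of_mem (h : IsLinearSystem P L) {l l' : Finset α} (hl : l ∈ L) (hl' : l' ∈ L)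
    {x y : α} (hxy : x ≠ y) (hx : x ∈ l) (hy : y ∈ l) (hx' : x ∈ l') (hy' : y ∈ l') : l = l' := by
  by_contra hne
  exact hxy (h.eq_of_mem_inter hl hl' hne hx hx' hy hy')

theorem degree_le_one_of_forall_mem (h : IsLinearSystem P L) {A : Finset (Finset α)} (hA : A ⊆ L)
    {p x : α} (hpA : ∀ l ∈ A, p ∈ l) (hxp : x ≠ p) : degree A x ≤ 1 :=
  card_le_one.2 fun l hl l' hl' => by
    rw [mem_filter] at hl hl'
    exact h.eq_of_mem_of_mem (hA hl.1) (hA hl'.1) hxp hl.2 (hpA l hl.1) hl'.2 (hpA l' hl'.1)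

theorem one_add_degree_mul_le_card (h : IsLinearSystem P L) {r : ℕ}
    (hcard : ∀ l ∈ L, l.card = r) {p : α} (hp : p ∈ P) : 1 + degree L p * (r - 1) ≤ P.card := by
  set M := L.filter (p ∈ ·)
  have hdisj : (M : Set (Finset α)).PairwiseDisjoint (·.erase p) := by
    intro l hl l' hl' hne
    rw [coe_filter] at hl hl'
    refine disjoint_left.2 fun x hx hx' => (mem_erase.1 hx).1 ?_
    exact h.eq_of_mem_inter hl.1 hl'.1 hne (mem_of_mem_erase hx) (mem_of_mem_erase hx') hl.2 hl'.2
  have hcard : ∀ l ∈ M, (l.erase p).card = r - 1 := fun l hl => by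
    rw [card_erase_of_mem (mem_filter.1 hl).2, hcard l (mem_filter.1 hl).1]
  calc 1 + degree L p * (r - 1) = (insert p (M.biUnion (·.erase p))).card := by
        rw [card_insert_of_notMem (by simp), card_biUnion hdisj, sum_congr rfl hcard, sum_const,
          smul_eq_mul, add_comm]
        rfl
    _ ≤ P.card := card_le_card <| insert_subset hp <| biUnion_subset.2 fun l hl =>
        (erase_subset p l).trans (h.2.1 l (mem_filter.1 hl).1)

theorem exists_isTransversal_card_le (h : IsLinearSystem P L) :
    ∃ T, IsTransversal P L T ∧ T.card ≤ L.card := by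
  choose f hf using h.1
  refine ⟨L.attach.image fun l => f l.1 l.2, ⟨?_, fun l hl => ⟨f l hl, ?_⟩⟩,
    card_image_le.trans card_attach.le⟩
  · intro x hx
    obtain ⟨⟨l, hl⟩, -, rfl⟩ := mem_image.1 hx
    exact h.2.1 l hl (hf l hl)
  · exact mem_inter.2 ⟨mem_image.2 ⟨⟨l, hl⟩, mem_attach _ _, rfl⟩, hf l hl⟩

theorem exists_forall_mem_of_inter_inter_nonempty (h : IsLinearSystem P L) (hL : 2 < L.card)
    (h₃ : ∀ l₁ ∈ L, ∀ l₂ ∈ L, ∀ l₃ ∈ L, l₁ ≠ l₂ → l₁ ≠ l₃ → l₂ ≠ l₃ →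
      (l₁ ∩ l₂ ∩ l₃).Nonempty) :
    ∃ x, ∀ l ∈ L, x ∈ l := by
  obtain ⟨l₁, h₁, l₂, h₂, l₃, h₃', h₁₂, h₁₃, h₂₃⟩ := two_lt_card.1 hL
  obtain ⟨x, hx⟩ := h₃ _ h₁ _ h₂ _ h₃' h₁₂ h₁₃ h₂₃
  simp only [mem_inter] at hx
  refine ⟨x, fun l hl => ?_⟩
  by_cases hl₁ : l = l₁
  · exact hl₁ ▸ hx.1.1
  by_cases hl₂ : l = l₂
  · exact hl₂ ▸ hx.1.2
  obtain ⟨y, hy⟩ := h₃ _ h₁ _ h₂ _ hl h₁₂ (Ne.symm hl₁) (Ne.symm hl₂)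
  simp only [mem_inter] at hy
  rw [h.eq_of_mem_inter h₁ h₂ h₁₂ hx.1.1 hx.1.2 hy.1.1 hy.1.2]
  exact hy.2

theorem exists_isTransversal_card_le_two (h : IsLinearSystem P L)
    (h₃ : ∀ l₁ ∈ L, ∀ l₂ ∈ L, ∀ l₃ ∈ L, l₁ ≠ l₂ → l₁ ≠ l₃ → l₂ ≠ l₃ →
      (l₁ ∩ l₂ ∩ l₃).Nonempty) :
    ∃ T, IsTransversal P L T ∧ T.card ≤ 2 := by
  by_cases hL : L.card ≤ 2
  · obtain ⟨T, hT, hTL⟩ := h.exists_isTransversal_card_le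
    exact ⟨T, hT, hTL.trans hL⟩
  obtain ⟨x, hx⟩ := h.exists_forall_mem_of_inter_inter_nonempty (by omega) h₃
  obtain ⟨l, hl⟩ := card_pos.1 (by omega : 0 < L.card)
  exact ⟨{x}, ⟨singleton_subset_iff.2 (h.2.1 l hl (hx l hl)),
    fun m hm => ⟨x, mem_inter.2 ⟨mem_singleton_self x, hx m hm⟩⟩⟩, by simp⟩

/-- A line through `p` containing a point of `B`-degree `≥ 2` is determined by the pair of lines
of `B` through that point. -/
theorem card_filter_exists_two_le_degree_le_choose (h : IsLinearSystem P L)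
    {B : Finset (Finset α)} (hBL : B ⊆ L) {p : α} (hBp : ∀ m ∈ B, p ∉ m) :
    ((L.filter (p ∈ ·)).filter fun l => ∃ x ∈ l, 2 ≤ degree B x).card ≤ B.card.choose 2 := by
  set M := L.filter (p ∈ ·)
  set fiber : Finset (Finset α) → Finset (Finset α) := fun s =>
    M.filter fun l => ∃ x ∈ l, ∀ m ∈ s, x ∈ m
  have hsub : (M.filter fun l => ∃ x ∈ l, 2 ≤ degree B x) ⊆ (B.powersetCard 2).biUnion fiber := by
    intro l hl
    obtain ⟨hlM, x, hxl, hx⟩ := mem_filter.1 hl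
    obtain ⟨s, hs, hs₂⟩ := exists_subset_card_eq hx
    exact mem_biUnion.2 ⟨s, mem_powersetCard.2 ⟨hs.trans (filter_subset _ _), hs₂⟩,
      mem_filter.2 ⟨hlM, x, hxl, fun m hm => (mem_filter.1 (hs hm)).2⟩⟩
  have hfiber : ∀ s ∈ B.powersetCard 2, (fiber s).card ≤ 1 := by
    intro s hs
    obtain ⟨hsB, hs₂⟩ := mem_powersetCard.1 hs
    obtain ⟨a, b, hab, rfl⟩ := card_eq_two.1 hs₂
    have ha : a ∈ B := hsB (mem_insert_self a {b})
    have hb : b ∈ B := hsB (by simp)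
    refine card_le_one.2 fun l hl l' hl' => ?_
    obtain ⟨⟨hlL, hpl⟩, x, hxl, hx⟩ := And.imp_left mem_filter.1 (mem_filter.1 hl)
    obtain ⟨⟨hlL', hpl'⟩, y, hyl', hy⟩ := And.imp_left mem_filter.1 (mem_filter.1 hl')
    have hxy : x = y := h.eq_of_mem_inter (hBL ha) (hBL hb) hab (hx a (by simp)) (hx b (by simp))
      (hy a (by simp)) (hy b (by simp))
    have hxp : x ≠ p := fun hxp => hBp a ha (hxp ▸ hx a (by simp))
    exact h.eq_of_mem_of_mem hlL hlL' hxp hxl hpl (hxy ▸ hyl') hpl'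
  calc _ ≤ ((B.powersetCard 2).biUnion fiber).card := card_le_card hsub
    _ ≤ ∑ _s ∈ B.powersetCard 2, 1 := card_biUnion_le.trans (sum_le_sum hfiber)
    _ = B.card.choose 2 := by simp

theorem is2Packing_union (h : IsLinearSystem P L) {A B : Finset (Finset α)} {p : α}
    (hA : ∀ l ∈ A, l ∈ L ∧ p ∈ l) (hA₂ : A.card ≤ 2) (hBL : B ⊆ L) (hBp : ∀ m ∈ B, p ∉ m)
    (hB : ∀ x, degree B x ≤ 2) (hAB : ∀ l ∈ A, ∀ x ∈ l, degree B x ≤ 1) :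
    Is2Packing L (A ∪ B) := by
  refine is2Packing_of_degree_le_two (union_subset (fun l hl => (hA l hl).1) hBL) fun x => ?_
  have hdeg : degree (A ∪ B) x ≤ degree A x + degree B x := by
    rw [degree, filter_union]
    exact card_union_le _ _
  by_cases hxp : x = p
  · subst hxp
    have hBx : degree B x = 0 := card_eq_zero.2 (filter_eq_empty_iff.2 hBp)
    have hAx : degree A x ≤ A.card := card_filter_le _ _
    omega
  have hAx := h.degree_le_one_of_forall_mem (fun l hl => (hA l hl).1) (fun l hl => (hA l hl).2) hxp
  by_cases hA₀ : degree A x = 0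
  · have := hB x
    omega
  obtain ⟨l, hl⟩ := card_pos.1 (Nat.pos_of_ne_zero hA₀)
  have := hAB l (mem_filter.1 hl).1 x (mem_filter.1 hl).2
  omega

theorem exists_is2Packing_card_eq_add_two (h : IsLinearSystem P L) {B : Finset (Finset α)}
    (hBL : B ⊆ L) {p : α} (hBp : ∀ m ∈ B, p ∉ m) (hB : ∀ x, degree B x ≤ 2)
    (hp : B.card.choose 2 + 2 ≤ degree L p) :
    ∃ R, Is2Packing L R ∧ R.card = B.card + 2 := by
  set M := L.filter (p ∈ ·)
  set bad := M.filter fun l => ∃ x ∈ l, 2 ≤ degree B x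
  have hgood : 2 ≤ (M \ bad).card := by
    have hbad : bad.card ≤ B.card.choose 2 := h.card_filter_exists_two_le_degree_le_choose hBL hBp
    have hM : B.card.choose 2 + 2 ≤ M.card := hp
    have := le_card_sdiff bad M
    omega
  obtain ⟨A, hA, hA₂⟩ := exists_subset_card_eq hgood
  have hAM : ∀ l ∈ A, l ∈ L ∧ p ∈ l := fun l hl => mem_filter.1 (mem_sdiff.1 (hA hl)).1
  have hAB : ∀ l ∈ A, ∀ x ∈ l, degree B x ≤ 1 := fun l hl x hx => by
    have hl := (mem_sdiff.1 (hA hl))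
    by_contra hx'
    exact hl.2 (mem_filter.2 ⟨hl.1, x, hx, by omega⟩)
  have hdisj : Disjoint A B := disjoint_left.2 fun l hlA hlB => hBp l hlB (hAM l hlA).2
  exact ⟨A ∪ B, h.is2Packing_union hAM hA₂.le hBL hBp hB hAB,
    by rw [card_union_of_disjoint hdisj, hA₂, add_comm]⟩

theorem inter_inter_nonempty_of_nu2_le_four (h : IsLinearSystem P L) (hν : nu2 L ≤ 4) {p : α}
    (hp : 5 ≤ degree L p) {m₁ m₂ m₃ : Finset α} (h₁ : m₁ ∈ L.filter (p ∉ ·))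
    (h₂ : m₂ ∈ L.filter (p ∉ ·)) (h₃ : m₃ ∈ L.filter (p ∉ ·)) (h₁₂ : m₁ ≠ m₂) (h₁₃ : m₁ ≠ m₃)
    (h₂₃ : m₂ ≠ m₃) : (m₁ ∩ m₂ ∩ m₃).Nonempty := by
  rw [mem_filter] at h₁ h₂ h₃
  by_contra hempty
  set B : Finset (Finset α) := {m₁, m₂, m₃}
  have hB₃ : B.card = 3 := by simp [B, h₁₂, h₁₃, h₂₃]
  have hB : ∀ x, degree B x ≤ 2 := by
    intro x
    by_contra hx
    have hall := card_filter_eq_iff.1 (le_antisymm (card_filter_le B (x ∈ ·)) (by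
      rw [degree] at hx
      omega))
    obtain ⟨hx₁, hx₂, hx₃⟩ : x ∈ m₁ ∧ x ∈ m₂ ∧ x ∈ m₃ := by simpa [B] using hall
    exact hempty ⟨x, mem_inter.2 ⟨mem_inter.2 ⟨hx₁, hx₂⟩, hx₃⟩⟩
  obtain ⟨R, hR, hR₅⟩ := h.exists_is2Packing_card_eq_add_two (p := p)
    (by simp [B, insert_subset_iff, h₁.1, h₂.1, h₃.1]) (by simp [B, h₁.2, h₂.2, h₃.2]) hB
    (by rw [hB₃]; exact hp)
  have := card_le_nu2 hR
  omega

end IsLinearSystem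

end

theorem stmt9_general {α : Type*} [DecidableEq α] (P : Finset α) (L : Finset (Finset α))
    (r : ℕ) (hLS : IsLinearSystem P L)
    (huniform : ∀ l ∈ L, l.card = r) (hν : nu2 L = 4) (hΔ : 5 ≤ maxDegree P L) :
    (r + 1) * tau P L ≤ P.card + L.card := by
  obtain ⟨p, hpP, hp⟩ := (Finset.le_sup_iff (by norm_num)).1 hΔ
  obtain ⟨T, hT, hT₂⟩ := (hLS.mono (filter_subset (p ∉ ·) L)).exists_isTransversal_card_le_two
    fun _ h₁ _ h₂ _ h₃ => hLS.inter_inter_nonempty_of_nu2_le_four hν.le hp h₁ h₂ h₃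
  have hτ : tau P L ≤ 3 :=
    (tau_le_card (hT.insert_of_filter_notMem hpP)).trans ((card_insert_le p T).trans (by omega))
  have hP := hLS.one_add_degree_mul_le_card huniform hpP
  have hL : degree L p ≤ L.card := card_filter_le _ _
  have : 5 * (r - 1) ≤ degree L p * (r - 1) := Nat.mul_le_mul_right _ hp
  calc (r + 1) * tau P L ≤ (r + 1) * 3 := Nat.mul_le_mul_left _ hτ
    _ ≤ P.card + L.card := by omega

/-- Any `r`-uniform linear system (`r ≥ 2`) with `ν₂ = 4` and `Δ ≥ 5`
satisfies `(r+1)·τ ≤ |P| + |ℒ|`. -/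
theorem stmt9 {α : Type*} [DecidableEq α] (P : Finset α) (L : Finset (Finset α))
    (r : ℕ) (hr : 2 ≤ r) (hLS : IsLinearSystem P L)
    (huniform : ∀ l ∈ L, l.card = r) (hν : nu2 L = 4) (hΔ : 5 ≤ maxDegree P L) :
    (r + 1) * tau P L ≤ P.card + L.card :=
  stmt9_general P L r hLS huniform hν hΔ
end
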